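/- arXiv:1403.7068 — 2 statements merged into one kernel-verified Lean document; each statement's English description precedes it below -/
import Mathlib

section
/- Let ν be a nonzero symmetric measure on ℝ with ν({0}) = 0 and ∫ y² ν(dy) < ∞, let η, φ > 0 and γ ∈ [0, 1). If −η + φ (1 + γ²) ∫ y² ν(dy) ≤ 0 (i.e. Ψ(1) ≤ 0), then ∫ log(1 + φ (|y| − γ y)²) ν(dy) < η. -/
/-!
Put `g y = φ (|y| - γ y)²`. Since `log (1 + x) < x` for `x > 0` and `g` vanishes only at `0`,
a `ν`-null point, `∫ log (1 + g) dν < ∫ g dν`. Expanding the square,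
`g y = φ (1 + γ²) y² - 2 φ γ |y| y`, and the odd term integrates to zero against the symmetric
measure `ν`, so `∫ g dν = φ (1 + γ²) ∫ y² dν ≤ η`.
-/

open MeasureTheory

section OddIntegral

variable {α E : Type*} [MeasurableSpace α] [InvolutiveNeg α] [MeasurableNeg α]
  [NormedAddCommGroup E] [NormedSpace ℝ E] {ν : Measure α}

theorem integral_eq_zero_of_map_neg_eq_self_of_odd (hsym : ν.map Neg.neg = ν) {f : α → E}
    (hf : ∀ x, f (-x) = -f x) : ∫ x, f x ∂ν = 0 := by
  have : IsAddTorsionFree E := .of_isTorsionFree ℝ E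
  have hcomp : ∫ x, f (-x) ∂ν = ∫ x, f x ∂ν := by
    conv_rhs => rw [← hsym]
    exact (integral_map_equiv (MeasurableEquiv.neg α) f).symm
  simp_rw [hf, integral_neg] at hcomp
  exact neg_eq_self.mp hcomp

end OddIntegral

theorem integral_lt_integral_of_ae_lt {α : Type*} [MeasurableSpace α] {ν : Measure α}
    (hν : ν ≠ 0) {f g : α → ℝ} (hf : Integrable f ν) (hg : Integrable g ν)
    (hlt : ∀ᵐ x ∂ν, f x < g x) :
    ∫ x, f x ∂ν < ∫ x, g x ∂ν := by
  have hpos : ∀ᵐ x ∂ν, 0 < g x - f x := hlt.mono fun x hx => sub_pos.2 hx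
  rw [← sub_pos, ← integral_sub hg hf, integral_pos_iff_support_of_nonneg_ae
    (f := fun x => g x - f x) (hpos.mono fun x hx => hx.le) (hg.sub hf)]
  have hfull : Function.support (fun x => g x - f x) =ᵐ[ν] Set.univ :=
    ae_eq_univ.2 (ae_iff.1 (hpos.mono fun x hx => hx.ne'))
  rw [measure_congr hfull]
  exact Measure.measure_univ_pos.2 hν

namespace Real

theorem log_one_add_le_self {x : ℝ} (hx : 0 ≤ x) : log (1 + x) ≤ x := by
  simpa using log_le_sub_one_of_pos (by linarith : 0 < 1 + x)

theorem log_one_add_lt_self {x : ℝ} (hx : 0 < x) : log (1 + x) < x := by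
  simpa using log_lt_sub_one_of_pos (by linarith : 0 < 1 + x) (by linarith)

end Real

theorem MeasureTheory.Integrable.log_one_add {α : Type*} [MeasurableSpace α] {ν : Measure α}
    {g : α → ℝ} (hg : Integrable g ν) (hg0 : ∀ x, 0 ≤ g x) :
    Integrable (fun x => Real.log (1 + g x)) ν := by
  refine hg.mono (hg.aemeasurable.const_add 1).log.aestronglyMeasurable
    (Filter.Eventually.of_forall fun x => ?_)
  have hlog0 : 0 ≤ Real.log (1 + g x) := Real.log_nonneg (by linarith [hg0 x])
  rw [Real.norm_of_nonneg hlog0, Real.norm_of_nonneg (hg0 x)]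
  exact Real.log_one_add_le_self (hg0 x)

theorem abs_sub_mul_sq_eq (γ y : ℝ) :
    (|y| - γ * y) ^ 2 = (1 + γ ^ 2) * y ^ 2 - 2 * γ * (|y| * y) := by
  rw [sub_sq, sq_abs]; ring

theorem abs_sub_mul_pos {γ y : ℝ} (hγ : |γ| < 1) (hy : y ≠ 0) : 0 < |y| - γ * y := by
  have : γ * y < |y| := calc
    γ * y ≤ |γ * y| := le_abs_self _
    _ = |γ| * |y| := abs_mul γ y
    _ < 1 * |y| := by gcongr
    _ = |y| := one_mul _
  linarith

section Symmetric

variable {ν : Measure ℝ} (hsym : ν.map Neg.neg = ν) (h2 : Integrable (fun y => y ^ 2) ν)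
include h2

theorem integrable_abs_mul_self : Integrable (fun y : ℝ => |y| * y) ν :=
  h2.congr' (by fun_prop) (Filter.Eventually.of_forall fun y => by
    simp only [Real.norm_eq_abs, abs_mul, abs_abs, pow_two])

theorem integrable_abs_sub_mul_sq (γ : ℝ) : Integrable (fun y => (|y| - γ * y) ^ 2) ν := by
  simp_rw [abs_sub_mul_sq_eq]
  exact (h2.const_mul _).sub ((integrable_abs_mul_self h2).const_mul _)

include hsym

theorem integral_abs_sub_mul_sq (γ : ℝ) :
    ∫ y, (|y| - γ * y) ^ 2 ∂ν = (1 + γ ^ 2) * ∫ y, y ^ 2 ∂ν := by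
  have hodd : ∫ y, |y| * y ∂ν = 0 :=
    integral_eq_zero_of_map_neg_eq_self_of_odd hsym fun y => by rw [abs_neg, mul_neg]
  simp_rw [abs_sub_mul_sq_eq]
  rw [integral_sub (h2.const_mul _) ((integrable_abs_mul_self h2).const_mul _),
    integral_const_mul, integral_const_mul, hodd, mul_zero, sub_zero]

end Symmetric

theorem stationarity_condition_of_psi_one_nonpos_general (ν : Measure ℝ) (hν : ν ≠ 0)
    (hsym : ν.map (fun y => -y) = ν) (h0 : ν {0} = 0)
    (h2 : Integrable (fun y => y ^ 2) ν)
    (η φ γ : ℝ) (hφ : 0 < φ) (hγ : γ ∈ Set.Ico (0 : ℝ) 1)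
    (hΨ1 : -η + φ * (1 + γ ^ 2) * ∫ y, y ^ 2 ∂ν ≤ 0) :
    ∫ y, Real.log (1 + φ * (|y| - γ * y) ^ 2) ∂ν < η := by
  have hγ1 : |γ| < 1 := abs_lt.2 ⟨by linarith [hγ.1], hγ.2⟩
  have hg : Integrable (fun y => φ * (|y| - γ * y) ^ 2) ν :=
    (integrable_abs_sub_mul_sq h2 γ).const_mul φ
  have hlt : ∀ᵐ y ∂ν, Real.log (1 + φ * (|y| - γ * y) ^ 2) < φ * (|y| - γ * y) ^ 2 := by
    filter_upwards [measure_eq_zero_iff_ae_notMem.1 h0] with y hy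
    exact Real.log_one_add_lt_self (by have := abs_sub_mul_pos hγ1 hy; positivity)
  calc ∫ y, Real.log (1 + φ * (|y| - γ * y) ^ 2) ∂ν
      < ∫ y, φ * (|y| - γ * y) ^ 2 ∂ν :=
        integral_lt_integral_of_ae_lt hν (hg.log_one_add fun y => by positivity) hg hlt
    _ = φ * (1 + γ ^ 2) * ∫ y, y ^ 2 ∂ν := by
        rw [integral_const_mul, integral_abs_sub_mul_sq hsym h2, mul_assoc]
    _ ≤ η := by linarith

/-- Proposition 2(c), first claim: for a nonzero symmetric measure `ν` with `ν({0}) = 0`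
and finite second moment, `η, φ > 0`, `γ ∈ [0,1)`, if `Ψ(1) = −η + φ(1+γ²)∫ y² ν(dy) ≤ 0`
then the stationarity condition `∫ log(1 + φ(|y| − γy)²) ν(dy) < η` holds. -/
theorem stationarity_condition_of_psi_one_nonpos (ν : Measure ℝ) (hν : ν ≠ 0)
    (hsym : ν.map (fun y => -y) = ν) (h0 : ν {0} = 0)
    (h2 : Integrable (fun y => y ^ 2) ν)
    (η φ γ : ℝ) (hη : 0 < η) (hφ : 0 < φ) (hγ : γ ∈ Set.Ico (0 : ℝ) 1)
    (hΨ1 : -η + φ * (1 + γ ^ 2) * ∫ y, y ^ 2 ∂ν ≤ 0) :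
    ∫ y, Real.log (1 + φ * (|y| - γ * y) ^ 2) ∂ν < η :=
  stationarity_condition_of_psi_one_nonpos_general ν hν hsym h0 h2 η φ γ hφ hγ hΨ1
end

section
/- In the GJR-COGARCH method-of-moments setting (Δ, S > 0; θ, η, φ > 0; γ ∈ [0,1); γ̃ = 1 + γ²; H = γ̃² + 4γ̃ − 4; p = η − φγ̃ > 0; q = 2p − φ²HS > 0; μ = θΔ/p; E = (1 − e^{−Δp})(e^{Δp} − 1); Γ, k, M₁, M₂, M₃, M₄ as defined), the quantity γ̃ satisfies the identification equation √M₄ · H · S · γ̃ = −M₂γ̃² + M₃γ̃ + H·S·p. -/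
/-!
Once `q` is eliminated through `φ²HS = 2p − q` and `η` through `η = p + φγ̃`, every moment
constant is rational in the model parameters: the exponential terms of `Γ` are cancelled by
`6kΓ/E`, and `2μ²` cancels its last term, so `M₁ = 2θ²ΔS/(pq)`. Then
`M₂ = (2p − q)/(2p)`, `M₃ = (2η/φ − γ̃)(2p − q)/(2p)` and `M₄ = (p/γ̃ + φ)²`, a perfect square,
and with these closed forms the identification equation is a polynomial identity.
-/

open Real

lemma one_sub_exp_neg_mul_exp_sub_one_pos {a : ℝ} (ha : 0 < a) :
    0 < (1 - exp (-a)) * (exp a - 1) :=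
  mul_pos (sub_pos.mpr (exp_lt_one_iff.mpr (neg_neg_of_pos ha)))
    (sub_pos.mpr (one_lt_exp_iff.mpr ha))

namespace GJRCOGARCH

variable {Δ S θ η φ γt H p q μ E Γ k e M₁ M₂ M₃ M₄ : ℝ}

lemma k_mul_Γ (hΓ : Γ ≠ 0)
    (hk : k = (θ ^ 2 / (Γ * p ^ 3)) * (2 * η / φ - γt) * (2 / q - 1 / p) * E) :
    k * Γ = θ ^ 2 / p ^ 3 * (2 * η / φ - γt) * (2 / q - 1 / p) * E := by
  rw [hk]
  field_simp

lemma M₁_eq (hp : p ≠ 0) (hq : q ≠ 0) (hφ : φ ≠ 0) (hH : H ≠ 0) (hE : E ≠ 0)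
    (hr : φ ^ 2 * H * S = 2 * p - q)
    (hΓ : Γ = 6 * (θ ^ 2 / p ^ 2) * (2 * η / φ - γt) * (2 / q - 1 / p) * (Δ - (1 - e) / p)
          + 2 * (θ ^ 2 / φ ^ 2) * (2 / q - 1 / p) * H⁻¹ * Δ + 2 * (θ ^ 2 / p ^ 2) * Δ ^ 2)
    (hkΓ : k * Γ = θ ^ 2 / p ^ 3 * (2 * η / φ - γt) * (2 / q - 1 / p) * E)
    (hμ : μ = θ * Δ / p)
    (hM1 : M₁ = Γ - (6 * k * Γ / E) * (p * Δ - 1 + e) - 2 * μ ^ 2) :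
    M₁ = 2 * θ ^ 2 * Δ * S / (p * q) := by
  have hcancel : M₁ = 2 * (θ ^ 2 / φ ^ 2) * (2 / q - 1 / p) * H⁻¹ * Δ := by
    rw [hM1, mul_assoc 6 k Γ, hkΓ, hμ, hΓ]
    field_simp
    ring
  rw [hcancel]
  field_simp
  linear_combination (-θ ^ 2 * Δ) * hr

lemma M₂_eq (hθ : θ ≠ 0) (hΔ : Δ ≠ 0) (hS : S ≠ 0) (hp : p ≠ 0)
    (hμ : μ = θ * Δ / p) (hM1 : M₁ = 2 * θ ^ 2 * Δ * S / (p * q))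
    (hM2 : M₂ = 1 - μ ^ 2 * S / (Δ * M₁)) :
    M₂ = (2 * p - q) / (2 * p) := by
  rw [hM2, hM1, hμ]
  field_simp

lemma M₃_eq (hθ : θ ≠ 0) (hΔ : Δ ≠ 0) (hS : S ≠ 0) (hp : p ≠ 0) (hq : q ≠ 0) (hE : E ≠ 0)
    (hkΓ : k * Γ = θ ^ 2 / p ^ 3 * (2 * η / φ - γt) * (2 / q - 1 / p) * E)
    (hM1 : M₁ = 2 * θ ^ 2 * Δ * S / (p * q))
    (hM3 : M₃ = Δ * k * Γ * p ^ 2 * S / (M₁ * E)) :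
    M₃ = (2 * η / φ - γt) * (2 * p - q) / (2 * p) := by
  rw [hM3, mul_assoc Δ k Γ, hkΓ, hM1]
  field_simp

lemma M₄_eq (hθ : θ ≠ 0) (hΔ : Δ ≠ 0) (hS : S ≠ 0) (hp : p ≠ 0) (hq : q ≠ 0) (hE : E ≠ 0)
    (hφ : φ ≠ 0) (hH : H ≠ 0) (hγt : γt ≠ 0)
    (hr : φ ^ 2 * H * S = 2 * p - q) (hη : η = p + φ * γt)
    (hkΓ : k * Γ = θ ^ 2 / p ^ 3 * (2 * η / φ - γt) * (2 / q - 1 / p) * E)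
    (hM1 : M₁ = 2 * θ ^ 2 * Δ * S / (p * q))
    (hM4 : M₄ = p ^ 2 / γt ^ 2 + 2 * Δ * k * Γ * p ^ 3 / (γt * M₁ * E * H)) :
    M₄ = (p / γt + φ) ^ 2 := by
  rw [hM4, mul_assoc (2 * Δ) k Γ, hkΓ, hM1, hη]
  field_simp
  linear_combination (-γt * (2 * p + γt * φ)) * hr

lemma identification_of_closed_forms (hp : 0 < p) (hφ : 0 < φ) (hγt : 0 < γt)
    (hr : φ ^ 2 * H * S = 2 * p - q) (hη : η = p + φ * γt)
    (hM2 : M₂ = (2 * p - q) / (2 * p))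
    (hM3 : M₃ = (2 * η / φ - γt) * (2 * p - q) / (2 * p))
    (hM4 : M₄ = (p / γt + φ) ^ 2) :
    sqrt M₄ * H * S * γt = -M₂ * γt ^ 2 + M₃ * γt + H * S * p := by
  rw [hM4, sqrt_sq (by positivity), hM2, hM3, hη, ← hr]
  field_simp
  ring

end GJRCOGARCH

open GJRCOGARCH

theorem mom_gamma_tilde_identification_general
    (Δ S θ η φ γ γt H p q μ E Γ k : ℝ)
    (hΔ : 0 < Δ) (hS : 0 < S) (hθ : 0 < θ) (hφ : 0 < φ)
    (hγt : γt = 1 + γ ^ 2) (hH : H = γt ^ 2 + 4 * γt - 4)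
    (hp : p = η - φ * γt) (hp0 : 0 < p)
    (hq : q = 2 * p - φ ^ 2 * H * S) (hq0 : 0 < q)
    (hμ : μ = θ * Δ / p)
    (hE : E = (1 - Real.exp (-Δ * p)) * (Real.exp (Δ * p) - 1))
    (hΓ : Γ = 6 * (θ ^ 2 / p ^ 2) * (2 * η / φ - γt) * (2 / q - 1 / p)
            * (Δ - (1 - Real.exp (-Δ * p)) / p)
          + 2 * (θ ^ 2 / φ ^ 2) * (2 / q - 1 / p) * H⁻¹ * Δ
          + 2 * (θ ^ 2 / p ^ 2) * Δ ^ 2)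
    (hk : k = (θ ^ 2 / (Γ * p ^ 3)) * (2 * η / φ - γt) * (2 / q - 1 / p) * E)
    (M₁ M₂ M₃ M₄ : ℝ)
    (hM1 : M₁ = Γ - (6 * k * Γ / E) * (p * Δ - 1 + Real.exp (-Δ * p)) - 2 * μ ^ 2)
    (hM2 : M₂ = 1 - μ ^ 2 * S / (Δ * M₁))
    (hM3 : M₃ = Δ * k * Γ * p ^ 2 * S / (M₁ * E))
    (hM4 : M₄ = p ^ 2 / γt ^ 2 + 2 * Δ * k * Γ * p ^ 3 / (γt * M₁ * E * H)) :
    Real.sqrt M₄ * H * S * γt = -M₂ * γt ^ 2 + M₃ * γt + H * S * p := by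
  have hγt1 : 1 ≤ γt := hγt ▸ le_add_of_nonneg_right (sq_nonneg γ)
  have hH0 : 0 < H := by
    rw [hH]; linarith [mul_nonneg (sub_nonneg.2 hγt1) (by linarith : (0 : ℝ) ≤ γt + 5)]
  have hη : η = p + φ * γt := by linarith
  have hr : φ ^ 2 * H * S = 2 * p - q := by linarith
  have hE0 : 0 < E := by
    rw [hE, neg_mul]; exact one_sub_exp_neg_mul_exp_sub_one_pos (mul_pos hΔ hp0)
  have hΓ0 : 0 < Γ := by
    have hB1 : 0 < 2 * η / φ - γt := by
      rw [sub_pos, lt_div_iff₀ hφ]; linarith [mul_pos hφ (by linarith : (0 : ℝ) < γt)]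
    have hB2 : 0 < 2 / q - 1 / p := by
      rw [sub_pos, div_lt_div_iff₀ hp0 hq0]; linarith [mul_pos (mul_pos (pow_pos hφ 2) hH0) hS]
    have hD : 0 < Δ - (1 - exp (-Δ * p)) / p := by
      rw [sub_pos, div_lt_iff₀ hp0, neg_mul]
      linarith [one_sub_lt_exp_neg (mul_pos hΔ hp0).ne']
    rw [hΓ]; positivity
  have hkΓ := k_mul_Γ hΓ0.ne' hk
  have hM1' := M₁_eq hp0.ne' hq0.ne' hφ.ne' hH0.ne' hE0.ne' hr hΓ hkΓ hμ hM1
  exact identification_of_closed_forms hp0 hφ (by linarith) hr hη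
    (M₂_eq hθ.ne' hΔ.ne' hS.ne' hp0.ne' hμ hM1' hM2)
    (M₃_eq hθ.ne' hΔ.ne' hS.ne' hp0.ne' hq0.ne' hE0.ne' hkΓ hM1' hM3)
    (M₄_eq hθ.ne' hΔ.ne' hS.ne' hp0.ne' hq0.ne' hE0.ne' hφ.ne' hH0.ne' (by linarith)
      hr hη hkΓ hM1' hM4)

/-- In the GJR-COGARCH method-of-moments setting, the quantity `γ̃ = 1 + γ²` satisfies
the identification equation `√M₄ · H · S · γ̃ = −M₂γ̃² + M₃γ̃ + HSp` (eq. (3.4) of the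
paper). -/
theorem mom_gamma_tilde_identification
    (Δ S θ η φ γ γt H p q μ E Γ k : ℝ)
    (hΔ : 0 < Δ) (hS : 0 < S) (hθ : 0 < θ) (hη : 0 < η) (hφ : 0 < φ)
    (hγ : γ ∈ Set.Ico (0 : ℝ) 1)
    (hγt : γt = 1 + γ ^ 2) (hH : H = γt ^ 2 + 4 * γt - 4)
    (hp : p = η - φ * γt) (hp0 : 0 < p)
    (hq : q = 2 * p - φ ^ 2 * H * S) (hq0 : 0 < q)
    (hμ : μ = θ * Δ / p)
    (hE : E = (1 - Real.exp (-Δ * p)) * (Real.exp (Δ * p) - 1))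
    (hΓ : Γ = 6 * (θ ^ 2 / p ^ 2) * (2 * η / φ - γt) * (2 / q - 1 / p)
            * (Δ - (1 - Real.exp (-Δ * p)) / p)
          + 2 * (θ ^ 2 / φ ^ 2) * (2 / q - 1 / p) * H⁻¹ * Δ
          + 2 * (θ ^ 2 / p ^ 2) * Δ ^ 2)
    (hk : k = (θ ^ 2 / (Γ * p ^ 3)) * (2 * η / φ - γt) * (2 / q - 1 / p) * E)
    (M₁ M₂ M₃ M₄ : ℝ)
    (hM1 : M₁ = Γ - (6 * k * Γ / E) * (p * Δ - 1 + Real.exp (-Δ * p)) - 2 * μ ^ 2)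
    (hM2 : M₂ = 1 - μ ^ 2 * S / (Δ * M₁))
    (hM3 : M₃ = Δ * k * Γ * p ^ 2 * S / (M₁ * E))
    (hM4 : M₄ = p ^ 2 / γt ^ 2 + 2 * Δ * k * Γ * p ^ 3 / (γt * M₁ * E * H)) :
    Real.sqrt M₄ * H * S * γt = -M₂ * γt ^ 2 + M₃ * γt + H * S * p :=
  mom_gamma_tilde_identification_general Δ S θ η φ γ γt H p q μ E Γ k hΔ hS hθ hφ hγt hH hp hp0 hq
    hq0 hμ hE hΓ hk M₁ M₂ M₃ M₄ hM1 hM2 hM3 hM4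
end
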